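/- arXiv:math/9907135 — 4 statements merged into one kernel-verified Lean document; each statement's English description precedes it below -/
import Mathlib

section
/- Let D ≥ 1 and let h_{αβ} (α, β = 1,…,D) be a smooth symmetric tensor field on ℝ^D (h_{αβ} = h_{βα}) satisfying the rank-2 Killing equation ∂_α h_{βγ} + ∂_β h_{γα} + ∂_γ h_{αβ} = 0 identically on ℝ^D for all α, β, γ. Then every component h_{αβ} is a polynomial function of degree at most 2; in particular the space of such fields h is finite-dimensional. -/
/-- The partial derivative `∂_μ f` of a function `f : ℝ^D → ℝ`. -/
noncomputable def pd {D : ℕ} (μ : Fin D) (f : (Fin D → ℝ) → ℝ) : (Fin D → ℝ) → ℝ :=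
  fun x => fderiv ℝ f x (Pi.single μ 1)

/-!
Differentiating the Killing equation twice shows that `∂_a ∂_b ∂_c h_{de}` is symmetric in
`(a, b, c)` and in `(d, e)` and has vanishing cyclic sum in `(c, d, e)`; these symmetries force it
to vanish. A smooth function whose third partial derivatives vanish is its own second-order Taylor
polynomial at `0`, as one sees by restricting it to the lines `t ↦ t • x`.
-/

open scoped ContDiff

section PartialDerivative

variable {D : ℕ} {f g : (Fin D → ℝ) → ℝ}

theorem contDiff_pd (hf : ContDiff ℝ ∞ f) (i : Fin D) : ContDiff ℝ ∞ (pd i f) :=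
  (contDiff_infty_iff_fderiv.1 hf).2.clm_apply contDiff_const

theorem pd_comm (hf : ContDiff ℝ ∞ f) (i j : Fin D) : pd i (pd j f) = pd j (pd i f) := by
  have hd : Differentiable ℝ (fderiv ℝ f) :=
    (contDiff_infty_iff_fderiv.1 hf).2.differentiable (by simp)
  have key : ∀ v w x, fderiv ℝ (fun y => fderiv ℝ f y v) x w = fderiv ℝ (fderiv ℝ f) x w v :=
    fun v w x => by simp [fderiv_clm_apply (hd x) (differentiableAt_const v)]
  funext x
  have hsymm := (hf.contDiffAt (x := x)).isSymmSndFDerivAt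
    (by rw [minSmoothness_of_isRCLikeNormedField]; exact ENat.LEInfty.out)
  unfold pd
  rw [key, key, hsymm]

theorem pd_add (hf : Differentiable ℝ f) (hg : Differentiable ℝ g) (i : Fin D) :
    pd i (f + g) = pd i f + pd i g := by
  funext x
  simp [pd, fderiv_add (hf x) (hg x)]

theorem pd_zero (i : Fin D) : pd i (0 : (Fin D → ℝ) → ℝ) = 0 := by
  funext x
  simp [pd]

theorem pd_sum_smul {ι : Type*} (s : Finset ι) (c : ι → ℝ) {F : ι → (Fin D → ℝ) → ℝ}
    (hF : ∀ k, Differentiable ℝ (F k)) (i : Fin D) :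
    pd i (∑ k ∈ s, c k • F k) = ∑ k ∈ s, c k • pd i (F k) := by
  funext x
  rw [pd, fderiv_sum fun k _ => ((hF k).const_smul (c k)).differentiableAt]
  simp [pd, fderiv_const_smul (hF _ x)]

theorem pd_add_add_eq_zero {A B C : (Fin D → ℝ) → ℝ} (hA : Differentiable ℝ A)
    (hB : Differentiable ℝ B) (hC : Differentiable ℝ C) (h : A + B + C = 0) (i : Fin D) :
    pd i A + pd i B + pd i C = 0 := by
  rw [← pd_add hA hB, ← pd_add (hA.add hB) hC, h, pd_zero]

end PartialDerivative

section DirDeriv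

variable {D : ℕ} {g : (Fin D → ℝ) → ℝ}

noncomputable def dirDeriv (v : Fin D → ℝ) (g : (Fin D → ℝ) → ℝ) : (Fin D → ℝ) → ℝ :=
  ∑ i, v i • pd i g

theorem fderiv_apply_eq_dirDeriv (g : (Fin D → ℝ) → ℝ) (x v : Fin D → ℝ) :
    fderiv ℝ g x v = dirDeriv v g x := by
  conv_lhs => rw [← Finset.univ_sum_single v]
  have : ∀ i, Pi.single i (v i) = v i • Pi.single i (1 : ℝ) := fun i => by
    rw [← Pi.single_smul', smul_eq_mul, mul_one]
  simp [dirDeriv, pd, this]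

theorem hasDerivAt_comp_smul (hg : Differentiable ℝ g) (v : Fin D → ℝ) (t : ℝ) :
    HasDerivAt (fun s : ℝ => g (s • v)) (dirDeriv v g (t • v)) t := by
  rw [← fderiv_apply_eq_dirDeriv]
  exact ((hg (t • v)).hasFDerivAt.comp_hasDerivAt t ((hasDerivAt_id t).smul_const v)).congr_deriv
    (by rw [one_smul])

theorem contDiff_dirDeriv (hg : ContDiff ℝ ∞ g) (v : Fin D → ℝ) :
    ContDiff ℝ ∞ (dirDeriv v g) := by
  rw [dirDeriv, Finset.sum_fn]
  exact ContDiff.sum fun i _ => (contDiff_pd hg i).const_smul (v i)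

end DirDeriv

theorem eq_add_add_half_of_hasDerivAt {φ₀ φ₁ φ₂ : ℝ → ℝ} (h₀ : ∀ t, HasDerivAt φ₀ (φ₁ t) t)
    (h₁ : ∀ t, HasDerivAt φ₁ (φ₂ t) t) (h₂ : ∀ t, HasDerivAt φ₂ 0 t) :
    φ₀ 1 = φ₀ 0 + φ₁ 0 + φ₂ 0 / 2 := by
  have const : ∀ g : ℝ → ℝ, (∀ t, HasDerivAt g 0 t) → ∀ t, g t = g 0 := fun g hg t =>
    is_const_of_deriv_eq_zero (fun t => (hg t).differentiableAt) (fun t => (hg t).deriv) t 0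
  have c₁ : ∀ t, φ₁ t = φ₁ 0 + φ₂ 0 * t := by
    have := const (fun t => φ₁ t - φ₂ 0 * t) fun t =>
      ((h₁ t).sub ((hasDerivAt_id t).const_mul (φ₂ 0))).congr_deriv
        (by rw [const φ₂ h₂ t]; ring)
    intro t
    linarith [this t]
  have := const (fun t => φ₀ t - φ₁ 0 * t - φ₂ 0 / 2 * t ^ 2) (fun t =>
    (((h₀ t).sub ((hasDerivAt_id t).const_mul (φ₁ 0))).sub
      ((hasDerivAt_pow 2 t).const_mul (φ₂ 0 / 2))).congr_deriv (by rw [c₁]; ring)) 1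
  linarith

theorem eq_taylor_of_pd_pd_pd_eq_zero {D : ℕ} {f : (Fin D → ℝ) → ℝ} (hf : ContDiff ℝ ∞ f)
    (h3 : ∀ i j k, pd i (pd j (pd k f)) = 0) (v : Fin D → ℝ) :
    f v = f 0 + dirDeriv v f 0 + dirDeriv v (dirDeriv v f) 0 / 2 := by
  have hf₁ := contDiff_dirDeriv hf v
  have hf₂ := contDiff_dirDeriv hf₁ v
  have hd₁ : ∀ k, Differentiable ℝ (pd k f) := fun k => (contDiff_pd hf k).differentiable (by simp)
  have hd₂ : ∀ j k, Differentiable ℝ (pd j (pd k f)) := fun j k =>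
    (contDiff_pd (contDiff_pd hf k) j).differentiable (by simp)
  have hd₃ : ∀ j, Differentiable ℝ (pd j (dirDeriv v f)) := fun j =>
    (contDiff_pd hf₁ j).differentiable (by simp)
  have h₂ : ∀ i j, pd i (pd j (dirDeriv v f)) = 0 := fun i j => by
    rw [dirDeriv, pd_sum_smul _ _ hd₁, pd_sum_smul _ _ (hd₂ j)]
    simp [h3]
  have h₁ : ∀ i, pd i (dirDeriv v (dirDeriv v f)) = 0 := fun i => by
    rw [dirDeriv, pd_sum_smul _ _ hd₃]
    simp [h₂]
  have hf₃ : dirDeriv v (dirDeriv v (dirDeriv v f)) = 0 := by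
    rw [dirDeriv]
    simp [h₁]
  simpa using eq_add_add_half_of_hasDerivAt
    (hasDerivAt_comp_smul (hf.differentiable (by simp)) v)
    (hasDerivAt_comp_smul (hf₁.differentiable (by simp)) v)
    (fun t => by simpa [hf₃] using hasDerivAt_comp_smul (hf₂.differentiable (by simp)) v t)

namespace MvPolynomial

theorem exists_totalDegree_le_two_eval_eq {σ R : Type*} [Fintype σ] [CommSemiring R]
    [Nontrivial R] (c : R) (a : σ → R) (b : σ → σ → R) :
    ∃ P : MvPolynomial σ R, P.totalDegree ≤ 2 ∧
      ∀ x, eval x P = c + ∑ i, a i * x i + ∑ i, ∑ j, b i j * (x i * x j) := by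
  refine ⟨C c + ∑ i, a i • X i + ∑ i, ∑ j, b i j • (X i * X j), ?_, fun x => by simp [smul_eval]⟩
  have hX : ∀ i, X i ∈ restrictTotalDegree σ R 2 := fun i => by
    simp [mem_restrictTotalDegree]
  have hXX : ∀ i j, X i * X j ∈ restrictTotalDegree σ R 2 := fun i j => by
    rw [mem_restrictTotalDegree]
    exact (totalDegree_mul _ _).trans (by simp)
  rw [← mem_restrictTotalDegree]
  refine add_mem (add_mem ?_ (sum_mem fun i _ => Submodule.smul_mem _ _ (hX i)))
    (sum_mem fun i _ => sum_mem fun j _ => Submodule.smul_mem _ _ (hXX i j))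
  simp [mem_restrictTotalDegree]

end MvPolynomial

theorem exists_mvPolynomial_of_pd_pd_pd_eq_zero {D : ℕ} {f : (Fin D → ℝ) → ℝ}
    (hf : ContDiff ℝ ∞ f) (h3 : ∀ i j k, pd i (pd j (pd k f)) = 0) :
    ∃ P : MvPolynomial (Fin D) ℝ, P.totalDegree ≤ 2 ∧ ∀ x, f x = MvPolynomial.eval x P := by
  obtain ⟨P, hdeg, hP⟩ := MvPolynomial.exists_totalDegree_le_two_eval_eq (f 0)
    (fun i => pd i f 0) (fun i j => pd i (pd j f) 0 / 2)
  refine ⟨P, hdeg, fun x => ?_⟩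
  have hd : ∀ k, Differentiable ℝ (pd k f) := fun k => (contDiff_pd hf k).differentiable (by simp)
  rw [hP, eq_taylor_of_pd_pd_pd_eq_zero hf h3 x, dirDeriv, dirDeriv]
  simp only [Finset.sum_apply, Pi.smul_apply, smul_eq_mul, pd_sum_smul _ _ hd, Finset.mul_sum,
    Finset.sum_div]
  congr 1
  · congr 1
    exact Finset.sum_congr rfl fun i _ => mul_comm _ _
  · exact Finset.sum_congr rfl fun i _ => Finset.sum_congr rfl fun j _ => by ring

theorem eq_zero_of_symmetric_of_cyclic_sum_eq_zero {ι : Type*} (P : ι → ι → ι → ι → ι → ℝ)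
    (h₁₂ : ∀ a b c d e, P a b c d e = P b a c d e)
    (h₂₃ : ∀ a b c d e, P a b c d e = P a c b d e)
    (h₄₅ : ∀ a b c d e, P a b c d e = P a b c e d)
    (hcyc : ∀ a b c d e, P a b c d e + P a b d e c + P a b e c d = 0) :
    ∀ a b c d e, P a b c d e = 0 := by
  have h₁₃ : ∀ a b c d e, P a b c d e = P c b a d e := fun a b c d e => by
    rw [h₁₂, h₂₃, h₁₂]
  have h_rot : ∀ a b c d e, P a b c d e = P c a b d e := fun a b c d e => by
    rw [h₁₃, h₂₃]
  -- The cyclic identity exchanges the pairs `(b, c)` and `(d, e)`; together with the symmetry in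
  -- the first three slots this makes `P a b` symmetric in its last three slots, so that the
  -- cyclic sum is `3 * P a b c d e`.
  have h_pair : ∀ a b c d e, P a b c d e = P a d e b c := by
    intro a b c d e
    have := hcyc a b c d e
    have := hcyc a c b d e
    have := hcyc a d b c e
    have := hcyc a e b c d
    have := h₂₃ a c b d e
    have := h₄₅ a b d e c
    have := h₂₃ a d b c e
    have := h₄₅ a c d e b
    have : P a d c e b = P a c d b e := by rw [h₂₃ a d c e b, h₄₅]
    have := h₂₃ a e b c d
    have : P a e c d b = P a c e b d := by rw [h₂₃ a e c d b, h₄₅]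
    have := h₂₃ a e d b c
    linarith
  have h₃₅ : ∀ a b c d e, P a b c d e = P a b e d c := fun a b c d e =>
    calc P a b c d e = P c a b d e := h_rot a b c d e
      _ = P c d e a b := h_pair c a b d e
      _ = P e d c a b := h₁₃ c d e a b
      _ = P e a b d c := h_pair e d c a b
      _ = P a b e d c := (h_rot a b e d c).symm
  intro a b c d e
  have := hcyc a b c d e
  have : P a b d e c = P a b c d e := by rw [h₃₅, h₄₅]
  have : P a b e c d = P a b c d e := by rw [h₄₅, h₃₅]
  linarith

theorem pd_pd_pd_eq_zero_of_killing {D : ℕ} {h : Fin D → Fin D → (Fin D → ℝ) → ℝ}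
    (hsmooth : ∀ α β, ContDiff ℝ ∞ (h α β)) (hsym : ∀ α β, h α β = h β α)
    (hkill : ∀ α β γ x, pd α (h β γ) x + pd β (h γ α) x + pd γ (h α β) x = 0)
    (a b c d e : Fin D) : pd a (pd b (pd c (h d e))) = 0 := by
  have diff : ∀ {g : (Fin D → ℝ) → ℝ}, ContDiff ℝ ∞ g → Differentiable ℝ g :=
    fun hg => hg.differentiable (by simp)
  have hpd : ∀ c d e, ContDiff ℝ ∞ (pd c (h d e)) := fun c d e => contDiff_pd (hsmooth d e) c
  have hpd₂ : ∀ b c d e, ContDiff ℝ ∞ (pd b (pd c (h d e))) := fun b c d e =>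
    contDiff_pd (hpd c d e) b
  have kill₂ : ∀ b c d e, pd b (pd c (h d e)) + pd b (pd d (h e c)) + pd b (pd e (h c d)) = 0 :=
    fun b c d e => pd_add_add_eq_zero (diff (hpd c d e)) (diff (hpd d e c)) (diff (hpd e c d))
      (funext (hkill c d e)) b
  have kill₃ : ∀ a b c d e, pd a (pd b (pd c (h d e))) + pd a (pd b (pd d (h e c)))
      + pd a (pd b (pd e (h c d))) = 0 := fun a b c d e =>
    pd_add_add_eq_zero (diff (hpd₂ b c d e)) (diff (hpd₂ b d e c)) (diff (hpd₂ b e c d))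
      (kill₂ b c d e) a
  funext x
  refine eq_zero_of_symmetric_of_cyclic_sum_eq_zero (fun a b c d e => pd a (pd b (pd c (h d e))) x)
    (fun a b c d e => ?_) (fun a b c d e => ?_) (fun a b c d e => ?_)
    (fun a b c d e => congrFun (kill₃ a b c d e) x) a b c d e
  · rw [pd_comm (hpd c d e)]
  · rw [pd_comm (hsmooth d e) b c]
  · rw [hsym d e]

theorem killing_tensor_polynomial_general (D : ℕ)
    (h : Fin D → Fin D → (Fin D → ℝ) → ℝ)
    (hsmooth : ∀ α β, ContDiff ℝ (⊤ : ℕ∞) (h α β))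
    (hsym : ∀ α β, h α β = h β α)
    (hkill : ∀ α β γ x, pd α (h β γ) x + pd β (h γ α) x + pd γ (h α β) x = 0) :
    ∀ α β, ∃ P : MvPolynomial (Fin D) ℝ,
      P.totalDegree ≤ 2 ∧ ∀ x, h α β x = MvPolynomial.eval x P := fun α β =>
  exists_mvPolynomial_of_pd_pd_pd_eq_zero (hsmooth α β)
    fun i j k => pd_pd_pd_eq_zero_of_killing hsmooth hsym hkill i j k α β

/-- A smooth symmetric rank-2 Killing tensor field on `ℝ^D` (i.e. one satisfying
`∂_α h_{βγ} + ∂_β h_{γα} + ∂_γ h_{αβ} = 0`) has polynomial components of degree at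
most `2`. -/
theorem killing_tensor_polynomial (D : ℕ) (hD : 1 ≤ D)
    (h : Fin D → Fin D → (Fin D → ℝ) → ℝ)
    (hsmooth : ∀ α β, ContDiff ℝ (⊤ : ℕ∞) (h α β))
    (hsym : ∀ α β, h α β = h β α)
    (hkill : ∀ α β γ x, pd α (h β γ) x + pd β (h γ α) x + pd γ (h α β) x = 0) :
    ∀ α β, ∃ P : MvPolynomial (Fin D) ℝ,
      P.totalDegree ≤ 2 ∧ ∀ x, h α β x = MvPolynomial.eval x P :=
  killing_tensor_polynomial_general D h hsmooth hsym hkill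
end

section
/- Let D ≥ 1 and let h_{αβ} be a smooth symmetric tensor field on ℝ^D (h_{αβ} = h_{βα}) such that ∂_μ h_{νλ} = ∂_ν h_{μλ} identically on ℝ^D for all indices μ, ν, λ (i.e., the first partial derivatives of h form a totally symmetric array). Then there exists a smooth function f : ℝ^D → ℝ such that h_{αβ} = ∂_α ∂_β f for all α, β. -/
lemma fderiv_apply_eq_sum_pd {D : ℕ} (f : (Fin D → ℝ) → ℝ) (x v : Fin D → ℝ) :
    fderiv ℝ f x v = ∑ μ, v μ * pd μ f x := by
  conv_lhs => rw [← Finset.univ_sum_single v]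
  refine (map_sum _ _ _).trans (Fintype.sum_congr _ _ fun μ => ?_)
  rw [pd, ← smul_eq_mul, ← map_smul, ← Pi.single_smul', smul_eq_mul, mul_one]

section OneForm

variable {D : ℕ} (g : Fin D → (Fin D → ℝ) → ℝ)

/-- The 1-form `g_ν dx^ν`, in the shape `E → E →L[ℝ] ℝ` taken by Mathlib's Poincaré lemma
`Convex.exists_forall_hasFDerivAt_of_fderiv_symmetric`. -/
noncomputable def oneForm (x : Fin D → ℝ) : (Fin D → ℝ) →L[ℝ] ℝ :=
  ∑ ν, g ν x • ContinuousLinearMap.proj ν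

lemma oneForm_apply (x v : Fin D → ℝ) : oneForm g x v = ∑ ν, g ν x * v ν := by
  simp [oneForm]

lemma oneForm_apply_single (x : Fin D → ℝ) (μ : Fin D) :
    oneForm g x (Pi.single μ 1) = g μ x := by
  simp [oneForm_apply, Pi.single_apply]

lemma contDiff_oneForm {n : WithTop ℕ∞} (hg : ∀ ν, ContDiff ℝ n (g ν)) :
    ContDiff ℝ n (oneForm g) := by
  unfold oneForm
  exact ContDiff.sum fun ν _ => (hg ν).smul contDiff_const

lemma fderiv_oneForm_apply {a : Fin D → ℝ} (hg : ∀ ν, DifferentiableAt ℝ (g ν) a)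
    (x y : Fin D → ℝ) :
    fderiv ℝ (oneForm g) a x y = ∑ ν, fderiv ℝ (g ν) a x * y ν := by
  have hω : HasFDerivAt (oneForm g)
      (∑ ν, (fderiv ℝ (g ν) a).smulRight (ContinuousLinearMap.proj ν)) a := by
    unfold oneForm
    exact HasFDerivAt.fun_sum fun ν _ =>
      (hg ν).hasFDerivAt.smul_const (ContinuousLinearMap.proj ν : (Fin D → ℝ) →L[ℝ] ℝ)
  simp [hω.fderiv]

lemma fderiv_oneForm_apply_comm {a : Fin D → ℝ} (hg : ∀ ν, DifferentiableAt ℝ (g ν) a)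
    (hc : ∀ μ ν, pd μ (g ν) a = pd ν (g μ) a) (x y : Fin D → ℝ) :
    fderiv ℝ (oneForm g) a x y = fderiv ℝ (oneForm g) a y x := by
  simp only [fderiv_oneForm_apply g hg, fderiv_apply_eq_sum_pd, Finset.sum_mul]
  rw [Finset.sum_comm]
  refine Fintype.sum_congr _ _ fun μ => Fintype.sum_congr _ _ fun ν => ?_
  rw [hc]; ring

end OneForm

theorem exists_pd_eq_of_pd_comm {D : ℕ} {n : ℕ∞} (hn : 1 ≤ n) (g : Fin D → (Fin D → ℝ) → ℝ)
    (hg : ∀ ν, ContDiff ℝ n (g ν)) (hc : ∀ μ ν x, pd μ (g ν) x = pd ν (g μ) x) :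
    ∃ f : (Fin D → ℝ) → ℝ, ContDiff ℝ (n + 1) f ∧ ∀ ν, pd ν f = g ν := by
  have hn' : (n : WithTop ℕ∞) ≠ 0 := by simpa [← Order.one_le_iff_ne_zero] using hn
  have hg' : ∀ ν, Differentiable ℝ (g ν) := fun ν => (hg ν).differentiable hn'
  have hω := contDiff_oneForm g hg
  obtain ⟨f, hf⟩ := convex_univ.exists_forall_hasFDerivAt_of_fderiv_symmetric isOpen_univ
    (hω.differentiable hn').differentiableOn
    fun a _ => fderiv_oneForm_apply_comm g (fun ν => hg' ν a) (fun μ ν => hc μ ν a)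
  have hdf : fderiv ℝ f = oneForm g := funext fun a => (hf a trivial).fderiv
  refine ⟨f, contDiff_succ_iff_fderiv.2
    ⟨fun a => (hf a trivial).differentiableAt, by simp, hdf ▸ hω⟩, fun ν => funext fun x => ?_⟩
  simp [pd, hdf, oneForm_apply_single]

theorem symmetric_tensor_is_hessian_general (D : ℕ)
    (h : Fin D → Fin D → (Fin D → ℝ) → ℝ)
    (hsmooth : ∀ α β, ContDiff ℝ (⊤ : ℕ∞) (h α β))
    (hsym : ∀ α β, h α β = h β α)
    (hclosed : ∀ μ ν lam x, pd μ (h ν lam) x = pd ν (h μ lam) x) :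
    ∃ f : (Fin D → ℝ) → ℝ, ContDiff ℝ (⊤ : ℕ∞) f ∧
      ∀ α β x, h α β x = pd α (pd β f) x := by
  have hinfty : ((⊤ : ℕ∞) : WithTop ℕ∞) + 1 = (⊤ : ℕ∞) := ENat.coe_top_add_one
  choose G hG hGh using fun lam => exists_pd_eq_of_pd_comm le_top (fun ν => h ν lam)
    (fun ν => hsmooth ν lam) (fun μ ν => hclosed μ ν lam)
  obtain ⟨f, hf, hfG⟩ := exists_pd_eq_of_pd_comm le_top G (fun lam => hinfty ▸ hG lam)
    fun μ ν x => by rw [hGh, hGh, hsym]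
  exact ⟨f, hinfty ▸ hf, fun α β x => by rw [hfG, hGh]⟩

/-- If the first derivatives of a smooth symmetric tensor field `h_{αβ}` on `ℝ^D`
form a totally symmetric array (`∂_μ h_{νλ} = ∂_ν h_{μλ}`), then `h` is a Hessian:
`h_{αβ} = ∂_α ∂_β f` for some smooth function `f`. -/
theorem symmetric_tensor_is_hessian (D : ℕ) (hD : 1 ≤ D)
    (h : Fin D → Fin D → (Fin D → ℝ) → ℝ)
    (hsmooth : ∀ α β, ContDiff ℝ (⊤ : ℕ∞) (h α β))
    (hsym : ∀ α β, h α β = h β α)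
    (hclosed : ∀ μ ν lam x, pd μ (h ν lam) x = pd ν (h μ lam) x) :
    ∃ f : (Fin D → ℝ) → ℝ, ContDiff ℝ (⊤ : ℕ∞) f ∧
      ∀ α β x, h α β x = pd α (pd β f) x :=
  symmetric_tensor_is_hessian_general D h hsmooth hsym hclosed
end

section
/- Let D ≥ 1 and let T_{αβγ} be a smooth totally symmetric tensor field on ℝ^D, with spin-3 curvature R_{α₁β₁α₂β₂α₃β₃} := Σ_{(s₁,s₂,s₃)∈{0,1}³} (−1)^{s₁+s₂+s₃} ∂_{c₁}∂_{c₂}∂_{c₃} T_{d₁d₂d₃}, where (c_i, d_i) = (α_i, β_i) if s_i = 0 and (β_i, α_i) if s_i = 1. Then R satisfies the second Bianchi identity: ∂_λ R_{α₁β₁α₂β₂α₃β₃} + ∂_{α₁} R_{β₁λα₂β₂α₃β₃} + ∂_{β₁} R_{λα₁α₂β₂α₃β₃} = 0 identically on ℝ^D for all indices. -/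
/-- Sign `(−1)^s` attached to `s ∈ {0,1}`, with `false ↦ 1` and `true ↦ −1`. -/
def bsign (s : Bool) : ℝ := if s then -1 else 1

/-- The upper index of the pair `(c, d)`: `(c,d) = (a,b)` if `s = 0` and `(b,a)` if `s = 1`. -/
def bfst {D : ℕ} (s : Bool) (a b : Fin D) : Fin D := if s then b else a

/-- The lower index of the pair `(c, d)`: `(c,d) = (a,b)` if `s = 0` and `(b,a)` if `s = 1`. -/
def bsnd {D : ℕ} (s : Bool) (a b : Fin D) : Fin D := if s then a else b

/-- The spin-3 curvature of a rank-3 tensor field `T` on `ℝ^D`: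
`R[T]_{α₁β₁α₂β₂α₃β₃} = Σ_{(s₁,s₂,s₃)∈{0,1}³} (−1)^{s₁+s₂+s₃} ∂_{c₁}∂_{c₂}∂_{c₃} T_{d₁d₂d₃}`,
i.e. `∂_{α₁}∂_{α₂}∂_{α₃} T_{β₁β₂β₃}` antisymmetrized in each pair `(α_i, β_i)`. -/
noncomputable def spin3Curv {D : ℕ} (T : Fin D → Fin D → Fin D → (Fin D → ℝ) → ℝ)
    (α₁ β₁ α₂ β₂ α₃ β₃ : Fin D) : (Fin D → ℝ) → ℝ := fun x =>
  ∑ s : Bool × Bool × Bool,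
    (bsign s.1 * bsign s.2.1 * bsign s.2.2) *
      pd (bfst s.1 α₁ β₁) (pd (bfst s.2.1 α₂ β₂) (pd (bfst s.2.2 α₃ β₃)
        (T (bsnd s.1 α₁ β₁) (bsnd s.2.1 α₂ β₂) (bsnd s.2.2 α₃ β₃)))) x

/-!
Contracting the last two antisymmetrized index pairs, write
`G_d := Σ_{s₂,s₃} ± ∂_{c₂}∂_{c₃} T_{d d₂ d₃}` (`spin3Tail`). Then
`R_{α₁β₁…} = ∂_{α₁}G_{β₁} − ∂_{β₁}G_{α₁}` is the exterior derivative of the covector field `G`,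
and the cyclic sum of `∂_λ` over `(λ, α₁, β₁)` vanishes because second partial derivatives
commute, i.e. `d² = 0`.
-/

open scoped ContDiff

section PartialDerivative

variable {D : ℕ} {f g : (Fin D → ℝ) → ℝ} {x : Fin D → ℝ}

lemma ContDiff.pd {m n : ℕ∞ω} (hf : ContDiff ℝ n f) (hmn : m + 1 ≤ n) (μ : Fin D) :
    ContDiff ℝ m (pd μ f) :=
  (hf.fderiv_right hmn).clm_apply contDiff_const

lemma pd_sub (μ : Fin D) (hf : DifferentiableAt ℝ f x) (hg : DifferentiableAt ℝ g x) :
    pd μ (fun y => f y - g y) x = pd μ f x - pd μ g x := by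
  simp [pd, fderiv_fun_sub hf hg]

lemma pd_sum_mul {ι : Type*} [Fintype ι] (μ : Fin D) (c : ι → ℝ) {F : ι → (Fin D → ℝ) → ℝ}
    (hF : ∀ i, DifferentiableAt ℝ (F i) x) :
    pd μ (fun y => ∑ i, c i * F i y) x = ∑ i, c i * pd μ (F i) x := by
  simp [pd, fderiv_fun_sum fun i _ => (hF i).const_mul (c i), fderiv_const_mul (hF _)]

lemma pd_pd_eq_fderiv_fderiv (μ ν : Fin D) (hf : ContDiffAt ℝ 2 f x) :
    pd μ (pd ν f) x = fderiv ℝ (fderiv ℝ f) x (Pi.single μ 1) (Pi.single ν 1) := by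
  have hdf : DifferentiableAt ℝ (fderiv ℝ f) x :=
    (hf.fderiv_right (m := 1) (by norm_num)).differentiableAt one_ne_zero
  unfold pd
  rw [fderiv_clm_apply hdf (differentiableAt_const _)]
  simp

lemma pd_comm_s12 (μ ν : Fin D) (hf : ContDiffAt ℝ 2 f x) :
    pd μ (pd ν f) x = pd ν (pd μ f) x := by
  rw [pd_pd_eq_fderiv_fderiv μ ν hf, pd_pd_eq_fderiv_fderiv ν μ hf,
    hf.isSymmSndFDerivAt (by simp)]

end PartialDerivative

section Curl

variable {D : ℕ}

noncomputable def curl (G : Fin D → (Fin D → ℝ) → ℝ) (a b : Fin D) : (Fin D → ℝ) → ℝ :=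
  fun x => pd a (G b) x - pd b (G a) x

lemma pd_curl_cyclic {G : Fin D → (Fin D → ℝ) → ℝ} (hG : ∀ a, ContDiff ℝ 2 (G a))
    (l a b : Fin D) (x : Fin D → ℝ) :
    pd l (curl G a b) x + pd a (curl G b l) x + pd b (curl G l a) x = 0 := by
  have hpd : ∀ μ ν, DifferentiableAt ℝ (pd μ (G ν)) x := fun μ ν =>
    ((hG ν).pd (m := 1) (by norm_num) μ).differentiable one_ne_zero x
  unfold curl
  rw [pd_sub l (hpd _ _) (hpd _ _), pd_sub a (hpd _ _) (hpd _ _), pd_sub b (hpd _ _) (hpd _ _),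
    pd_comm_s12 l a (hG b).contDiffAt, pd_comm_s12 l b (hG a).contDiffAt,
    pd_comm_s12 a b (hG l).contDiffAt]
  ring

end Curl

section SpinThree

variable {D : ℕ}

noncomputable def spin3Tail (T : Fin D → Fin D → Fin D → (Fin D → ℝ) → ℝ)
    (α₂ β₂ α₃ β₃ d : Fin D) : (Fin D → ℝ) → ℝ := fun x =>
  ∑ t : Bool × Bool, (bsign t.1 * bsign t.2) *
    pd (bfst t.1 α₂ β₂) (pd (bfst t.2 α₃ β₃) (T d (bsnd t.1 α₂ β₂) (bsnd t.2 α₃ β₃))) x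

variable {T : Fin D → Fin D → Fin D → (Fin D → ℝ) → ℝ}

lemma contDiff_spin3Tail {m n : ℕ∞ω} (hT : ∀ α β γ, ContDiff ℝ n (T α β γ)) (hmn : m + 2 ≤ n)
    (α₂ β₂ α₃ β₃ d : Fin D) : ContDiff ℝ m (spin3Tail T α₂ β₂ α₃ β₃ d) := by
  have hmn' : m + 1 + 1 ≤ n := by rwa [add_assoc, one_add_one_eq_two]
  exact ContDiff.sum fun _ _ => contDiff_const.mul (((hT _ _ _).pd hmn' _).pd le_rfl _)

lemma spin3Curv_eq_curl (hT : ∀ α β γ, ContDiff ℝ 3 (T α β γ)) (α₁ β₁ α₂ β₂ α₃ β₃ : Fin D) :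
    spin3Curv T α₁ β₁ α₂ β₂ α₃ β₃ = curl (spin3Tail T α₂ β₂ α₃ β₃) α₁ β₁ := by
  funext x
  have hdiff : ∀ d (t : Bool × Bool), DifferentiableAt ℝ
      (pd (bfst t.1 α₂ β₂) (pd (bfst t.2 α₃ β₃) (T d (bsnd t.1 α₂ β₂) (bsnd t.2 α₃ β₃)))) x :=
    fun d t => (((hT _ _ _).pd (m := 2) (by norm_num) _).pd (m := 1) (by norm_num) _).differentiable
      one_ne_zero x
  unfold curl spin3Tail
  rw [pd_sum_mul _ _ (hdiff β₁), pd_sum_mul _ _ (hdiff α₁)]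
  simp only [spin3Curv, Fintype.sum_prod_type, Fintype.sum_bool, bsign, bfst, bsnd,
    Bool.false_eq_true, if_true, if_false]
  ring

end SpinThree

theorem spin_three_curvature_second_bianchi_general (D : ℕ)
    (T : Fin D → Fin D → Fin D → (Fin D → ℝ) → ℝ)
    (hsmooth : ∀ α β γ, ContDiff ℝ (⊤ : ℕ∞) (T α β γ)) :
    ∀ lam α₁ β₁ α₂ β₂ α₃ β₃ x,
      pd lam (spin3Curv T α₁ β₁ α₂ β₂ α₃ β₃) x
        + pd α₁ (spin3Curv T β₁ lam α₂ β₂ α₃ β₃) x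
        + pd β₁ (spin3Curv T lam α₁ α₂ β₂ α₃ β₃) x = 0 := by
  intro lam α₁ β₁ α₂ β₂ α₃ β₃ x
  have hT : ∀ α β γ, ContDiff ℝ 4 (T α β γ) := fun α β γ =>
    (hsmooth α β γ).of_le (WithTop.coe_le_coe.mpr le_top)
  simp only [spin3Curv_eq_curl fun α β γ => (hT α β γ).of_le (by norm_num)]
  exact pd_curl_cyclic (contDiff_spin3Tail hT (by norm_num) α₂ β₂ α₃ β₃) lam α₁ β₁ x

/-- The spin-3 curvature of a smooth totally symmetric tensor field satisfies the
second Bianchi identity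
`∂_λ R_{α₁β₁α₂β₂α₃β₃} + ∂_{α₁} R_{β₁λα₂β₂α₃β₃} + ∂_{β₁} R_{λα₁α₂β₂α₃β₃} = 0`. -/
theorem spin_three_curvature_second_bianchi (D : ℕ) (hD : 1 ≤ D)
    (T : Fin D → Fin D → Fin D → (Fin D → ℝ) → ℝ)
    (hsmooth : ∀ α β γ, ContDiff ℝ (⊤ : ℕ∞) (T α β γ))
    (hTsym₁ : ∀ α β γ, T α β γ = T β α γ)
    (hTsym₂ : ∀ α β γ, T α β γ = T α γ β) :
    ∀ lam α₁ β₁ α₂ β₂ α₃ β₃ x,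
      pd lam (spin3Curv T α₁ β₁ α₂ β₂ α₃ β₃) x
        + pd α₁ (spin3Curv T β₁ lam α₂ β₂ α₃ β₃) x
        + pd β₁ (spin3Curv T lam α₁ α₂ β₂ α₃ β₃) x = 0 :=
  spin_three_curvature_second_bianchi_general D T hsmooth
end

section
/- Let D ≥ 1, let ε_{μ₁…μ_D} denote the Levi-Civita symbol on {1,…,D}^D (the sign of the permutation (μ₁,…,μ_D) when all indices are distinct, and 0 otherwise), and let T^{μν} be a smooth symmetric tensor field on ℝ^D. Define τ_{μ₁…μ_{D−1}ν₁…ν_{D−1}} := Σ_{μ,ν} T^{μν} ε_{μμ₁…μ_{D−1}} ε_{νν₁…ν_{D−1}}. Then the following are equivalent: (a) Σ_μ ∂_μ T^{μν} = 0 identically on ℝ^D for every ν; (b) for all indices μ₀, μ₁, …, μ_{D−1}, ν₁, …, ν_{D−1}, the total antisymmetrization over (μ₀, μ₁, …, μ_{D−1}) of ∂_{μ₀} τ_{μ₁…μ_{D−1}ν₁…ν_{D−1}}, i.e., Σ_{σ ∈ S_D} sgn(σ) ∂_{μ_{σ(0)}} τ_{μ_{σ(1)}…μ_{σ(D−1)}ν₁…ν_{D−1}},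 vanishes identically on ℝ^D. -/
/-- The Levi-Civita symbol `ε_{μ₁…μ_D}` on `{1,…,D}^D`: the sign of the permutation
`(μ₁,…,μ_D)` when all indices are distinct, and `0` otherwise. -/
noncomputable def lcSymbol {D : ℕ} (μ : Fin D → Fin D) : ℝ :=
  if h : Function.Bijective μ then ((Equiv.Perm.sign (Equiv.ofBijective μ h) : ℤ) : ℝ) else 0

/-!
Differentiating under the contraction gives
`∂_α τ_{μs νs} = Σ_{a,b} ∂_α T^{ab} ε_{a μs} ε_{b νs}`. If two of the indices `μ₀, …, μ_{D−1}`
coincide, the antisymmetrization vanishes: composing `σ` with the transposition of the two equal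
slots reverses the sign and leaves the summand unchanged. If they form a permutation `μ`, then in
the summand for `σ` only `a = μ(σ 0)` survives, with `ε_{a, μ∘σ∘succ} = sgn σ · ε_μ`; the two signs
of `σ` cancel, and since `(D−1)!` permutations share each value of `σ 0`, the antisymmetrization is
`(D−1)! ε_μ Σ_b (Σ_a ∂_a T^{ab}) ε_{b νs}`. This vanishes when `T` is conserved, and the choice
`μ = id`, `νs = ν.succAbove` (all indices but `ν`) isolates the `ν`-th component of the divergence.
-/

open Finset Function Equiv

lemma lcSymbol_ne_zero_iff {D : ℕ} {μ : Fin D → Fin D} : lcSymbol μ ≠ 0 ↔ Injective μ := by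
  rw [Finite.injective_iff_bijective, lcSymbol]
  split_ifs with h
  · exact iff_of_true (by simp) h
  · exact iff_of_false (by simp) h

lemma lcSymbol_comp_perm {D : ℕ} (μ : Fin D → Fin D) (σ : Perm (Fin D)) :
    lcSymbol (μ ∘ σ) = (Perm.sign σ : ℤ) * lcSymbol μ := by
  by_cases hμ : Bijective μ
  · have hμσ : Bijective (μ ∘ σ) := (σ.bijective_comp μ).2 hμ
    have : Equiv.ofBijective (μ ∘ σ) hμσ = Equiv.ofBijective μ hμ * σ := Equiv.ext fun _ => rfl
    rw [lcSymbol, dif_pos hμσ, lcSymbol, dif_pos hμ, this, map_mul, mul_comm]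
    push_cast
    ring
  · have hμσ : ¬ Bijective (μ ∘ σ) := mt (σ.bijective_comp μ).1 hμ
    rw [lcSymbol, dif_neg hμσ, lcSymbol, dif_neg hμ, mul_zero]

lemma lcSymbol_cons_tail {d : ℕ} {m : Fin (d + 1) → Fin (d + 1)} (hm : Injective m)
    (a : Fin (d + 1)) :
    lcSymbol (Fin.cons a (Fin.tail m)) = if a = m 0 then lcSymbol m else 0 := by
  split_ifs with ha
  · rw [ha, Fin.cons_self_tail]
  · by_contra h
    obtain ⟨k, rfl⟩ := Finite.injective_iff_surjective.1 hm a
    have hk : k ≠ 0 := by rintro rfl; exact ha rfl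
    refine (Fin.cons_injective_iff.1 (lcSymbol_ne_zero_iff.1 h)).1 ⟨k.pred hk, ?_⟩
    simp [Fin.tail]

lemma lcSymbol_cons_succAbove_ne_zero_iff {d : ℕ} (ν b : Fin (d + 1)) :
    lcSymbol (Fin.cons b ν.succAbove) ≠ 0 ↔ b = ν := by
  simp [lcSymbol_ne_zero_iff, Fin.cons_injective_iff, Fin.succAbove_right_injective]

lemma sum_mul_lcSymbol_cons_succAbove {d : ℕ} (c : Fin (d + 1) → ℝ) (ν : Fin (d + 1)) :
    ∑ b, c b * lcSymbol (Fin.cons b ν.succAbove) = c ν * lcSymbol (Fin.cons ν ν.succAbove) := by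
  refine sum_eq_single ν (fun b _ hb => ?_) (by simp)
  rw [not_ne_iff.1 (mt (lcSymbol_cons_succAbove_ne_zero_iff ν b).1 hb), mul_zero]

lemma sum_perm_sign_mul_comp_eq_zero {ι α R : Type*} [Fintype ι] [DecidableEq ι] [CommRing R]
    {μ : ι → α} (hμ : ¬ Injective μ) (F : (ι → α) → R) :
    ∑ σ : Perm ι, ((Perm.sign σ : ℤ) : R) * F (μ ∘ σ) = 0 := by
  obtain ⟨i, j, hμij, hij⟩ := not_injective_iff.1 hμ
  have hμswap : μ ∘ swap i j = μ := by
    funext k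
    simp only [comp_apply, swap_apply_def]
    split_ifs <;> simp_all
  refine sum_ninvolution (swap i j * ·) (fun σ => ?_) (fun σ _ => ?_) (fun _ => mem_univ _)
    (fun σ => swap_mul_self_mul i j σ)
  · rw [Perm.coe_mul, ← comp_assoc, hμswap, map_mul, Perm.sign_swap hij]
    push_cast
    ring
  · simpa [mul_eq_right] using hij

lemma sum_perm_apply_zero {d : ℕ} {M : Type*} [AddCommMonoid M] (f : Fin (d + 1) → M) :
    ∑ σ : Perm (Fin (d + 1)), f (σ 0) = d.factorial • ∑ p, f p := by
  rw [← (Perm.decomposeFin (n := d)).symm.sum_comp, Fintype.sum_prod_type, smul_sum]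
  simp [Fintype.card_perm]

lemma pd_sum {D : ℕ} {ι : Type*} (μ : Fin D) (s : Finset ι) {f : ι → (Fin D → ℝ) → ℝ}
    {x : Fin D → ℝ} (hf : ∀ i ∈ s, DifferentiableAt ℝ (f i) x) :
    pd μ (fun y => ∑ i ∈ s, f i y) x = ∑ i ∈ s, pd μ (f i) x := by
  simp only [pd, fderiv_fun_sum hf, _root_.sum_apply]

lemma pd_mul_const {D : ℕ} (μ : Fin D) {f : (Fin D → ℝ) → ℝ} {x : Fin D → ℝ}
    (hf : DifferentiableAt ℝ f x) (c : ℝ) :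
    pd μ (fun y => f y * c) x = pd μ f x * c := by
  simp only [pd]
  rw [fderiv_mul_const hf, _root_.smul_apply, smul_eq_mul, mul_comm]

noncomputable def dualTensor {d : ℕ} (T : Fin (d + 1) → Fin (d + 1) → (Fin (d + 1) → ℝ) → ℝ)
    (μs νs : Fin d → Fin (d + 1)) (x : Fin (d + 1) → ℝ) : ℝ :=
  ∑ a, ∑ b, T a b x * lcSymbol (Fin.cons a μs) * lcSymbol (Fin.cons b νs)

section DualTensor

variable {d : ℕ} {T : Fin (d + 1) → Fin (d + 1) → (Fin (d + 1) → ℝ) → ℝ}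

lemma pd_dualTensor (hT : ∀ a b, Differentiable ℝ (T a b)) (α : Fin (d + 1))
    (μs νs : Fin d → Fin (d + 1)) (x : Fin (d + 1) → ℝ) :
    pd α (dualTensor T μs νs) x =
      ∑ a, ∑ b, pd α (T a b) x * lcSymbol (Fin.cons a μs) * lcSymbol (Fin.cons b νs) := by
  have hterm : ∀ a b, DifferentiableAt ℝ
      (fun y => T a b y * lcSymbol (Fin.cons a μs) * lcSymbol (Fin.cons b νs)) x :=
    fun a b => ((hT a b x).mul_const _).mul_const _
  unfold dualTensor
  rw [pd_sum α _ fun a _ => DifferentiableAt.fun_sum fun b _ => hterm a b]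
  refine sum_congr rfl fun a _ => ?_
  rw [pd_sum α _ fun b _ => hterm a b]
  refine sum_congr rfl fun b _ => ?_
  rw [pd_mul_const α ((hT a b x).mul_const _), pd_mul_const α (hT a b x)]

lemma sum_perm_sign_mul_pd_dualTensor_of_injective (hT : ∀ a b, Differentiable ℝ (T a b))
    {μ : Fin (d + 1) → Fin (d + 1)} (hμ : Injective μ) (νs : Fin d → Fin (d + 1))
    (x : Fin (d + 1) → ℝ) :
    ∑ σ : Perm (Fin (d + 1)),
        ((Perm.sign σ : ℤ) : ℝ) * pd (μ (σ 0)) (dualTensor T (fun i => μ (σ i.succ)) νs) x =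
      d.factorial * lcSymbol μ * ∑ b, (∑ a, pd a (T a b) x) * lcSymbol (Fin.cons b νs) := by
  set H : Fin (d + 1) → ℝ := fun a => ∑ b, pd a (T a b) x * lcSymbol (Fin.cons b νs)
  have hterm : ∀ σ : Perm (Fin (d + 1)), ((Perm.sign σ : ℤ) : ℝ) *
      pd (μ (σ 0)) (dualTensor T (Fin.tail (μ ∘ σ)) νs) x = lcSymbol μ * H (μ (σ 0)) := by
    intro σ
    rw [pd_dualTensor hT, sum_comm, mul_sum, mul_sum]
    refine sum_congr rfl fun b _ => ?_
    simp only [lcSymbol_cons_tail (hμ.comp σ.injective), mul_ite, mul_zero, ite_mul, zero_mul,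
      sum_ite_eq', mem_univ, if_true, lcSymbol_comp_perm, comp_apply]
    have hsign : ((Perm.sign σ : ℤ) : ℝ) * (Perm.sign σ : ℤ) = 1 := by
      rw [← Int.cast_mul, ← Units.val_mul, Int.units_mul_self, Units.val_one, Int.cast_one]
    linear_combination
      (pd (μ (σ 0)) (T (μ (σ 0)) b) x * lcSymbol μ * lcSymbol (Fin.cons b νs)) * hsign
  calc ∑ σ : Perm (Fin (d + 1)),
        ((Perm.sign σ : ℤ) : ℝ) * pd (μ (σ 0)) (dualTensor T (fun i => μ (σ i.succ)) νs) x
      = lcSymbol μ * ∑ σ : Perm (Fin (d + 1)), H (μ (σ 0)) := by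
        rw [mul_sum]
        exact sum_congr rfl fun σ _ => hterm σ
    _ = lcSymbol μ * (d.factorial * ∑ a, H a) := by
        rw [sum_perm_apply_zero (fun p => H (μ p)), nsmul_eq_mul,
          Fintype.sum_bijective μ (Finite.injective_iff_bijective.1 hμ) _ _ fun _ => rfl]
    _ = d.factorial * lcSymbol μ * ∑ b, (∑ a, pd a (T a b) x) * lcSymbol (Fin.cons b νs) := by
        simp only [H]
        rw [sum_comm]
        simp only [sum_mul]
        ring

end DualTensor

theorem conservation_iff_dual_closed_general (d : ℕ)
    (T : Fin (d + 1) → Fin (d + 1) → (Fin (d + 1) → ℝ) → ℝ)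
    (hsmooth : ∀ μ ν, ContDiff ℝ (⊤ : ℕ∞) (T μ ν))
    (τ : (Fin d → Fin (d + 1)) → (Fin d → Fin (d + 1)) → (Fin (d + 1) → ℝ) → ℝ)
    (hτ : ∀ μs νs x, τ μs νs x =
      ∑ μ : Fin (d + 1), ∑ ν : Fin (d + 1),
        T μ ν x * lcSymbol (Fin.cons μ μs) * lcSymbol (Fin.cons ν νs)) :
    (∀ ν x, ∑ μ : Fin (d + 1), pd μ (T μ ν) x = 0) ↔
    (∀ (μ : Fin (d + 1) → Fin (d + 1)) (νs : Fin d → Fin (d + 1)) (x : Fin (d + 1) → ℝ),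
      ∑ σ : Equiv.Perm (Fin (d + 1)),
        ((Equiv.Perm.sign σ : ℤ) : ℝ) *
          pd (μ (σ 0)) (τ (fun i => μ (σ i.succ)) νs) x = 0) := by
  obtain rfl : τ = dualTensor T := funext fun μs => funext fun νs => funext (hτ μs νs)
  have hT : ∀ a b, Differentiable ℝ (T a b) := fun a b => (hsmooth a b).differentiable (by simp)
  constructor
  · intro hconserved μ νs x
    by_cases hμ : Injective μ
    · simp [sum_perm_sign_mul_pd_dualTensor_of_injective hT hμ, hconserved]
    · exact sum_perm_sign_mul_comp_eq_zero hμ fun m => pd (m 0) (dualTensor T (Fin.tail m) νs) x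
  · intro hclosed ν x
    have h := hclosed id ν.succAbove x
    rw [sum_perm_sign_mul_pd_dualTensor_of_injective hT injective_id,
      sum_mul_lcSymbol_cons_succAbove] at h
    simpa [Nat.factorial_ne_zero, lcSymbol_ne_zero_iff.2 injective_id,
      (lcSymbol_cons_succAbove_ne_zero_iff ν ν).2 rfl] using h

/-- For a smooth symmetric 2-tensor `T^{μν}` on `ℝ^D` and its dual
`τ_{μ₁…μ_{D−1}ν₁…ν_{D−1}} = Σ_{μν} T^{μν} ε_{μμ₁…μ_{D−1}} ε_{νν₁…ν_{D−1}}`, the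
conservation law `Σ_μ ∂_μ T^{μν} = 0` holds iff the total antisymmetrization of
`∂_{μ₀} τ_{μ₁…μ_{D−1}ν₁…ν_{D−1}}` over `(μ₀, μ₁, …, μ_{D−1})` vanishes identically.
(Here `D = d + 1 ≥ 1`.) -/
theorem conservation_iff_dual_closed (d : ℕ)
    (T : Fin (d + 1) → Fin (d + 1) → (Fin (d + 1) → ℝ) → ℝ)
    (hsmooth : ∀ μ ν, ContDiff ℝ (⊤ : ℕ∞) (T μ ν))
    (hsym : ∀ μ ν, T μ ν = T ν μ)
    (τ : (Fin d → Fin (d + 1)) → (Fin d → Fin (d + 1)) → (Fin (d + 1) → ℝ) → ℝ)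
    (hτ : ∀ μs νs x, τ μs νs x =
      ∑ μ : Fin (d + 1), ∑ ν : Fin (d + 1),
        T μ ν x * lcSymbol (Fin.cons μ μs) * lcSymbol (Fin.cons ν νs)) :
    (∀ ν x, ∑ μ : Fin (d + 1), pd μ (T μ ν) x = 0) ↔
    (∀ (μ : Fin (d + 1) → Fin (d + 1)) (νs : Fin d → Fin (d + 1)) (x : Fin (d + 1) → ℝ),
      ∑ σ : Equiv.Perm (Fin (d + 1)),
        ((Equiv.Perm.sign σ : ℤ) : ℝ) *
          pd (μ (σ 0)) (τ (fun i => μ (σ i.succ)) νs) x = 0) :=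
  conservation_iff_dual_closed_general d T hsmooth τ hτ
end
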